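/- If G is a graph with no isolated vertices and uv is an edge of the complement of G, then γ_tR(G) - 2 ≤ γ_tR(G+uv) ≤ γ_tR(G). -/
import Mathlib


/-- A total Roman dominating function: values in {0,1,2}, every vertex with value 0
has a neighbour with value 2, and vertices with positive value are not isolated in
the induced subgraph of positive-value vertices. -/
def TRDF {V : Type*} (G : SimpleGraph V) (f : V → ℕ) : Prop :=
  (∀ v, f v ≤ 2) ∧
  (∀ v, f v = 0 → ∃ u, G.Adj v u ∧ f u = 2) ∧
  (∀ v, 0 < f v → ∃ u, G.Adj v u ∧ 0 < f u)

/-- The total Roman domination number. -/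
noncomputable def trdn {V : Type*} [Fintype V] (G : SimpleGraph V) : ℕ :=
  sInf {w | ∃ f : V → ℕ, TRDF G f ∧ w = ∑ v, f v}

/-- The graph `G + uv`. -/
def addEdge {V : Type*} (G : SimpleGraph V) (u v : V) : SimpleGraph V :=
  G ⊔ SimpleGraph.fromEdgeSet {s(u, v)}

/-- `G` has no isolated vertices. -/
def NoIsolated {V : Type*} (G : SimpleGraph V) : Prop := ∀ v, ∃ u, G.Adj v u

lemma addEdge_adj {V : Type*} (G : SimpleGraph V) (u v a b : V) (hne : u ≠ v) :
    (addEdge G u v).Adj a b ↔ G.Adj a b ∨ (a = u ∧ b = v) ∨ (a = v ∧ b = u) := by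
  simp only [addEdge, SimpleGraph.sup_adj, SimpleGraph.fromEdgeSet_adj,
    Set.mem_singleton_iff, Sym2.eq, Sym2.rel_iff', Prod.mk.injEq, Prod.swap_prod_mk]
  constructor
  · rintro (h | ⟨(⟨rfl, rfl⟩ | ⟨rfl, rfl⟩), hab⟩) <;> tauto
  · rintro (h | ⟨rfl, rfl⟩ | ⟨rfl, rfl⟩) <;> tauto

lemma sum_bound {V : Type*} [Fintype V] [DecidableEq V] (f g : V → ℕ) (a b : V)
    (h : ∀ z, g z ≤ f z + ((if z = a then 1 else 0) + (if z = b then 1 else 0))) :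
    ∑ z, g z ≤ ∑ z, f z + 2 := by
  calc ∑ z, g z ≤ ∑ z, (f z + ((if z = a then 1 else 0) + (if z = b then 1 else 0))) :=
        Finset.sum_le_sum fun z _ => h z
    _ = ∑ z, f z + (∑ z, (if z = a then 1 else 0) + ∑ z, (if z = b then 1 else 0)) := by
        rw [Finset.sum_add_distrib, Finset.sum_add_distrib]
    _ ≤ ∑ z, f z + 2 := by simp

/-- Case A: `f u = 0` and `u` has no `G`-neighbour with value 2. -/

lemma caseA {V : Type*} [Fintype V] [DecidableEq V] (G : SimpleGraph V) (hiso : NoIsolated G)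
    (u v : V) (huv : Gᶜ.Adj u v) (f : V → ℕ) (hf : TRDF (addEdge G u v) f)
    (h0 : f u = 0) (h2 : ¬∃ w, G.Adj u w ∧ f w = 2) :
    ∃ g : V → ℕ, TRDF G g ∧ ∑ z, g z ≤ ∑ z, f z + 2 := by
  obtain ⟨hle, hzero, hpos⟩ := hf
  obtain ⟨hnadj, hne⟩ : ¬ G.Adj u v ∧ u ≠ v := by
    have := huv; rw [SimpleGraph.compl_adj] at this
    exact ⟨this.2, this.1⟩
  -- f v = 2
  have hv2 : f v = 2 := by
    obtain ⟨y, hy, hy2⟩ := hzero u h0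
    rw [addEdge_adj _ _ _ _ _ hne] at hy
    rcases hy with h | ⟨_, rfl⟩ | ⟨h, _⟩
    · exact absurd ⟨y, h, hy2⟩ h2
    · exact hy2
    · exact absurd h hne
  obtain ⟨w, hw⟩ := hiso u
  have hwu : w ≠ u := fun h => G.irrefl (h ▸ hw)
  have hwv : w ≠ v := fun h => hnadj (h ▸ hw)
  set g : V → ℕ := fun z => if z = u then 1 else if z = w then max (f w) 1 else f z with hg
  have gu : g u = 1 := by simp [hg]
  have gw : g w = max (f w) 1 := by simp [hg, hwu]
  have gother : ∀ z, z ≠ u → z ≠ w → g z = f z := by intro z h1 h2; simp [hg, h1, h2]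
  have gdef : ∀ z, g z = 1 ∨ g z = max (f z) 1 ∨ g z = f z := by
    intro z; by_cases h1 : z = u
    · subst h1; left; exact gu
    · by_cases h2 : z = w
      · subst h2; right; left; exact gw
      · right; right; exact gother z h1 h2
  have gzero : ∀ z, g z = 0 → f z = 0 := by
    intro z hz; rcases gdef z with h | h | h <;> omega
  have gtwo : ∀ z, f z = 2 → g z = 2 := by
    intro z hz; rcases gdef z with h | h | h
    · exfalso; by_cases h1 : z = u
      · subst h1; omega
      · by_cases h2 : z = w
        · subst h2; rw [gw] at h; omega
        · rw [gother z h1 h2] at h; omega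
    · omega
    · omega
  refine ⟨g, ⟨?_, ?_, ?_⟩, ?_⟩
  · intro z; have := hle z; rcases gdef z with h | h | h <;> omega
  · -- zero condition
    intro z hz
    have hfz : f z = 0 := gzero z hz
    have hzu : z ≠ u := fun h => by rw [h, gu] at hz; omega
    have hzv : z ≠ v := fun h => by rw [h] at hfz; omega
    obtain ⟨y, hy, hy2⟩ := hzero z hfz
    rw [addEdge_adj _ _ _ _ _ hne] at hy
    rcases hy with h | ⟨h, _⟩ | ⟨h, _⟩
    · exact ⟨y, h, gtwo y hy2⟩
    · exact absurd h hzu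
    · exact absurd h hzv
  · -- positive condition
    intro z hz
    by_cases hzu : z = u
    · subst hzu; exact ⟨w, hw, by rw [gw]; omega⟩
    by_cases hzw : z = w
    · subst hzw; exact ⟨u, hw.symm, by rw [gu]; omega⟩
    have hfz : 0 < f z := by rw [gother z hzu hzw] at hz; exact hz
    obtain ⟨y, hy, hyp⟩ := hpos z hfz
    rw [addEdge_adj _ _ _ _ _ hne] at hy
    have hyu : y ≠ u := fun h => by rw [h, h0] at hyp; omega
    rcases hy with h | ⟨h, _⟩ | ⟨_, h⟩
    · refine ⟨y, h, ?_⟩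
      by_contra hc
      push_neg at hc
      have := gzero y (by omega)
      omega
    · exact absurd h hzu
    · exact absurd h hyu
  · apply sum_bound f g u w
    intro z
    by_cases h1 : z = u
    · subst h1; rw [gu]; simp [h0]
    · by_cases h2 : z = w
      · subst h2; rw [gw]; simp [hwu]
      · rw [gother z h1 h2]; omega

lemma caseC {V : Type*} [Fintype V] [DecidableEq V] (G : SimpleGraph V) (hiso : NoIsolated G)
    (u v : V) (huv : Gᶜ.Adj u v) (f : V → ℕ) (hf : TRDF (addEdge G u v) f)
    (hu : f u = 0 → ∃ w, G.Adj u w ∧ f w = 2) (hv : f v = 0 → ∃ w, G.Adj v w ∧ f w = 2) :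
    ∃ g : V → ℕ, TRDF G g ∧ ∑ z, g z ≤ ∑ z, f z + 2 := by
  obtain ⟨hle, hzero, hpos⟩ := hf
  obtain ⟨hnadj, hne⟩ : ¬ G.Adj u v ∧ u ≠ v := by
    have := huv; rw [SimpleGraph.compl_adj] at this
    exact ⟨this.2, this.1⟩
  obtain ⟨w, hw⟩ := hiso u
  obtain ⟨x, hx⟩ := hiso v
  have hwu : w ≠ u := fun h => G.irrefl (h ▸ hw)
  have hxv : x ≠ v := fun h => G.irrefl (h ▸ hx)
  have hxu : x ≠ u := fun h => hnadj ((h ▸ hx).symm)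
  have hwv : w ≠ v := fun h => hnadj (h ▸ hw)
  set g : V → ℕ :=
    fun z => if (z = w ∧ 0 < f u) ∨ (z = x ∧ 0 < f v) then max (f z) 1 else f z with hg
  have gpos : ∀ z, ((z = w ∧ 0 < f u) ∨ (z = x ∧ 0 < f v)) → g z = max (f z) 1 := by
    intro z h; simp only [hg]; rw [if_pos h]
  have gneg : ∀ z, ¬((z = w ∧ 0 < f u) ∨ (z = x ∧ 0 < f v)) → g z = f z := by
    intro z h; simp only [hg]; rw [if_neg h]
  have gdef : ∀ z, g z = f z ∨ g z = max (f z) 1 := by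
    intro z
    by_cases h1 : (z = w ∧ 0 < f u) ∨ (z = x ∧ 0 < f v)
    · right; exact gpos z h1
    · left; exact gneg z h1
  have gu : g u = f u := by simp [hg, hwu.symm, hxu.symm]
  have gv : g v = f v := by simp [hg, hwv.symm, hxv.symm]
  have gzero : ∀ z, g z = 0 → f z = 0 := by intro z hz; rcases gdef z with h | h <;> omega
  have gtwo : ∀ z, f z = 2 → g z = 2 := by intro z hz; rcases gdef z with h | h <;> omega
  refine ⟨g, ⟨?_, ?_, ?_⟩, ?_⟩
  · intro z; have := hle z; rcases gdef z with h | h <;> omega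
  · -- zero condition
    intro z hz
    have hfz : f z = 0 := gzero z hz
    by_cases hzu : z = u
    · subst hzu; obtain ⟨y, hy, hy2⟩ := hu hfz; exact ⟨y, hy, gtwo y hy2⟩
    by_cases hzv : z = v
    · subst hzv; obtain ⟨y, hy, hy2⟩ := hv hfz; exact ⟨y, hy, gtwo y hy2⟩
    obtain ⟨y, hy, hy2⟩ := hzero z hfz
    rw [addEdge_adj _ _ _ _ _ hne] at hy
    rcases hy with h | ⟨h, _⟩ | ⟨h, _⟩
    · exact ⟨y, h, gtwo y hy2⟩
    · exact absurd h hzu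
    · exact absurd h hzv
  · -- positive condition
    intro z hz
    by_cases hzu : z = u
    · have hfu : 0 < f u := by rw [hzu, gu] at hz; exact hz
      refine ⟨w, hzu ▸ hw, ?_⟩
      have : g w = max (f w) 1 := gpos w (Or.inl ⟨rfl, hfu⟩)
      omega
    by_cases hzv : z = v
    · have hfv : 0 < f v := by rw [hzv, gv] at hz; exact hz
      refine ⟨x, hzv ▸ hx, ?_⟩
      have : g x = max (f x) 1 := gpos x (Or.inr ⟨rfl, hfv⟩)
      omega
    by_cases hfz : 0 < f z
    · obtain ⟨y, hy, hyp⟩ := hpos z hfz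
      rw [addEdge_adj _ _ _ _ _ hne] at hy
      rcases hy with h | ⟨h, _⟩ | ⟨h, _⟩
      · refine ⟨y, h, ?_⟩
        by_contra hc
        push_neg at hc
        have := gzero y (by omega)
        omega
      · exact absurd h hzu
      · exact absurd h hzv
    · -- f z = 0 but g z > 0 : z was bumped
      have hcond : (z = w ∧ 0 < f u) ∨ (z = x ∧ 0 < f v) := by
        by_contra hc
        have : g z = f z := gneg z hc
        omega
      rcases hcond with ⟨rfl, hfu⟩ | ⟨rfl, hfv⟩
      · exact ⟨u, hw.symm, by rwa [gu]⟩
      · exact ⟨v, hx.symm, by rwa [gv]⟩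
  · apply sum_bound f g w x
    intro z
    by_cases h1 : (z = w ∧ 0 < f u) ∨ (z = x ∧ 0 < f v)
    · have hgz : g z = max (f z) 1 := gpos z h1
      rcases h1 with ⟨rfl, _⟩ | ⟨rfl, _⟩ <;> simp only [hgz, if_pos rfl, if_true, ite_true] <;> omega
    · have : g z = f z := gneg z h1
      omega

lemma addEdge_comm {V : Type*} (G : SimpleGraph V) (u v : V) :
    addEdge G u v = addEdge G v u := by
  unfold addEdge
  rw [Sym2.eq_swap]

lemma key_lemma {V : Type*} [Fintype V] [DecidableEq V] (G : SimpleGraph V)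
    (hiso : NoIsolated G) (u v : V) (huv : Gᶜ.Adj u v) (f : V → ℕ)
    (hf : TRDF (addEdge G u v) f) :
    ∃ g : V → ℕ, TRDF G g ∧ ∑ z, g z ≤ ∑ z, f z + 2 := by
  by_cases hu : f u = 0 ∧ ¬∃ w, G.Adj u w ∧ f w = 2
  · exact caseA G hiso u v huv f hf hu.1 hu.2
  by_cases hv : f v = 0 ∧ ¬∃ w, G.Adj v w ∧ f w = 2
  · have hf' : TRDF (addEdge G v u) f := by rwa [← addEdge_comm]
    exact caseA G hiso v u huv.symm f hf' hv.1 hv.2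
  · push_neg at hu hv
    exact caseC G hiso u v huv f hf hu hv

lemma trdf_one {V : Type*} (G : SimpleGraph V) (hiso : NoIsolated G) :
    TRDF G (fun _ => 1) := by
  refine ⟨fun _ => one_le_two, fun v h => absurd h one_ne_zero, fun v _ => ?_⟩
  obtain ⟨y, hy⟩ := hiso v
  exact ⟨y, hy, one_pos⟩

lemma noIsolated_addEdge {V : Type*} (G : SimpleGraph V) (hiso : NoIsolated G) (u v : V) :
    NoIsolated (addEdge G u v) := by
  intro z
  obtain ⟨y, hy⟩ := hiso z
  exact ⟨y, (SimpleGraph.sup_adj _ _ _ _).mpr (Or.inl hy)⟩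

lemma trdf_mono {V : Type*} (G : SimpleGraph V) (u v : V) (f : V → ℕ) (hf : TRDF G f) :
    TRDF (addEdge G u v) f := by
  obtain ⟨h1, h2, h3⟩ := hf
  refine ⟨h1, fun z hz => ?_, fun z hz => ?_⟩
  · obtain ⟨y, hy, hy2⟩ := h2 z hz
    exact ⟨y, (SimpleGraph.sup_adj _ _ _ _).mpr (Or.inl hy), hy2⟩
  · obtain ⟨y, hy, hy2⟩ := h3 z hz
    exact ⟨y, (SimpleGraph.sup_adj _ _ _ _).mpr (Or.inl hy), hy2⟩

theorem stmt2 {V : Type*} [Fintype V] (G : SimpleGraph V) (hiso : NoIsolated G)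
    (u v : V) (huv : Gᶜ.Adj u v) :
    trdn G - 2 ≤ trdn (addEdge G u v) ∧ trdn (addEdge G u v) ≤ trdn G := by
  classical
  constructor
  · rw [tsub_le_iff_right]
    have hne : {w | ∃ f : V → ℕ, TRDF (addEdge G u v) f ∧ w = ∑ z, f z}.Nonempty :=
      ⟨∑ _z : V, 1, fun _ => 1, trdf_one _ (noIsolated_addEdge G hiso u v), rfl⟩
    have hmem : trdn (addEdge G u v) ∈
        {w | ∃ f : V → ℕ, TRDF (addEdge G u v) f ∧ w = ∑ z, f z} :=
      Nat.sInf_mem hne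
    obtain ⟨f, hf, hsum⟩ := hmem
    obtain ⟨g, hg, hle⟩ := key_lemma G hiso u v huv f hf
    have h1 : trdn G ≤ ∑ z, g z := Nat.sInf_le ⟨g, hg, rfl⟩
    omega
  · have hne : {w | ∃ f : V → ℕ, TRDF G f ∧ w = ∑ z, f z}.Nonempty :=
      ⟨∑ _z : V, 1, fun _ => 1, trdf_one _ hiso, rfl⟩
    have hmem : trdn G ∈ {w | ∃ f : V → ℕ, TRDF G f ∧ w = ∑ z, f z} :=
      Nat.sInf_mem hne
    obtain ⟨f, hf, hsum⟩ := hmem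
    have h1 : trdn (addEdge G u v) ≤ ∑ z, f z :=
      Nat.sInf_le ⟨f, trdf_mono G u v f hf, rfl⟩
    omega
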